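/- arXiv:1909.04715 — 4 statements merged into one kernel-verified Lean document; each statement's English description precedes it below -/
import Mathlib

section
/- If each f_m : ℝ^d → ℝ is convex and L-smooth, f = (1/M) Σ_m f_m, and g_t = (1/M) Σ_m ∇f_m(x_t^m), then ‖g_t‖² ≤ 2L² V_t + 4L (f(x̂_t) − f(x_*)), where x̂_t = (1/M) Σ_m x_t^m, V_t = (1/M) Σ_m ‖x_t^m − x̂_t‖², and x_* is a minimizer of f. -/
open Finset RealInnerProductSpace

/-- Average of vectors. -/
noncomputable def avgV {d M : ℕ} (x : Fin M → EuclideanSpace ℝ (Fin d)) :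
    EuclideanSpace ℝ (Fin d) := (1 / (M : ℝ)) • ∑ m, x m

/-- Average of reals. -/
noncomputable def avgR {M : ℕ} (a : Fin M → ℝ) : ℝ := (1 / (M : ℝ)) * ∑ m, a m

section helpers

variable {E : Type*} [NormedAddCommGroup E] [InnerProductSpace ℝ E]

/-- From convexity + L-smoothness: gradient is L-Lipschitz (squared form). -/
lemma grad_lip_sq (L : ℝ) (hL : 0 < L) (f : E → ℝ) (g : E → E)
    (hsc : ∀ x y, 0 ≤ f x - f y - ⟪g y, x - y⟫ ∧
      f x - f y - ⟪g y, x - y⟫ ≤ L / 2 * ‖x - y‖ ^ 2) (x y : E) :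
    ‖g x - g y‖ ^ 2 ≤ L ^ 2 * ‖x - y‖ ^ 2 := by
  set z := y + L⁻¹ • (g x - g y) with hzdef
  have hz : z - y = L⁻¹ • (g x - g y) := by simp [hzdef]
  have h1 := (hsc z x).1
  have h2 := (hsc z y).2
  have h3 := (hsc y x).2
  have e1 : ⟪g x, z - x⟫ = ⟪g x, z - y⟫ + ⟪g x, y - x⟫ := by
    rw [← inner_add_right]; congr 1; abel
  have e2 : ⟪g x, z - y⟫ - ⟪g y, z - y⟫ = L⁻¹ * ‖g x - g y‖ ^ 2 := by
    rw [hz, real_inner_smul_right, real_inner_smul_right, ← mul_sub,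
      ← inner_sub_left, real_inner_self_eq_norm_sq]
  have e3 : ‖z - y‖ ^ 2 = L⁻¹ ^ 2 * ‖g x - g y‖ ^ 2 := by
    rw [hz, norm_smul, mul_pow]
    congr 1
    rw [Real.norm_eq_abs, sq_abs]
  have hxy : ‖y - x‖ = ‖x - y‖ := norm_sub_rev y x
  have hLinv : L * L⁻¹ = 1 := mul_inv_cancel₀ hL.ne'
  have h4 : L⁻¹ * ‖g x - g y‖ ^ 2 ≤
      L / 2 * ‖x - y‖ ^ 2 + L / 2 * (L⁻¹ ^ 2 * ‖g x - g y‖ ^ 2) := by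
    rw [← e3]; rw [hxy] at h3; linarith [h1, h2, h3, e1, e2]
  have h5 := mul_le_mul_of_nonneg_left h4 (by positivity : (0:ℝ) ≤ 2 * L)
  have h6 : 2 * L * (L⁻¹ * ‖g x - g y‖ ^ 2) = 2 * ‖g x - g y‖ ^ 2 := by
    field_simp
  have h7 : 2 * L * (L / 2 * ‖x - y‖ ^ 2 + L / 2 * (L⁻¹ ^ 2 * ‖g x - g y‖ ^ 2)) =
      L ^ 2 * ‖x - y‖ ^ 2 + ‖g x - g y‖ ^ 2 := by
    field_simp
  linarith

end helpers

/-- Jensen: squared norm of average ≤ average of squared norms. -/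
lemma avg_norm_sq_le {d M : ℕ} (hM : 0 < M) (v : Fin M → EuclideanSpace ℝ (Fin d)) :
    ‖avgV v‖ ^ 2 ≤ avgR (fun m => ‖v m‖ ^ 2) := by
  have hMpos : (0:ℝ) < M := Nat.cast_pos.mpr hM
  have h1 : ‖∑ m, v m‖ ≤ ∑ m, ‖v m‖ := norm_sum_le _ _
  have h2 : (∑ m, ‖v m‖) ^ 2 ≤ (M : ℝ) * ∑ m, ‖v m‖ ^ 2 := by
    simpa using sq_sum_le_card_mul_sum_sq (s := Finset.univ) (f := fun m => ‖v m‖)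
  have h3 : ‖avgV v‖ ^ 2 = (1 / (M:ℝ)) ^ 2 * ‖∑ m, v m‖ ^ 2 := by
    rw [avgV, norm_smul, mul_pow, Real.norm_eq_abs, sq_abs]
  rw [h3, avgR]
  have h4 : ‖∑ m, v m‖ ^ 2 ≤ (M:ℝ) * ∑ m, ‖v m‖ ^ 2 := by
    nlinarith [norm_nonneg (∑ m, v m), Finset.sum_nonneg (fun m (_ : m ∈ Finset.univ) => norm_nonneg (v m))]
  calc (1 / (M:ℝ)) ^ 2 * ‖∑ m, v m‖ ^ 2 ≤ (1 / (M:ℝ)) ^ 2 * ((M:ℝ) * ∑ m, ‖v m‖ ^ 2) := by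
        apply mul_le_mul_of_nonneg_left h4 (by positivity)
    _ = (1 / (M:ℝ)) * ∑ m, ‖v m‖ ^ 2 := by field_simp

/-- Lemma 3: If each `f_m` is convex and `L`-smooth with gradient
`g_m`, `f = (1/M) ∑ f_m`, and `g_t = (1/M) ∑ ∇f_m(x_t^m)`, then
`‖g_t‖² ≤ 2L² V_t + 4L (f(x̂_t) − f(x⋆))`. -/
theorem average_gradient_bound {d M : ℕ} (hM : 0 < M) (L : ℝ) (hL : 0 < L)
    (f : Fin M → EuclideanSpace ℝ (Fin d) → ℝ)
    (g : Fin M → EuclideanSpace ℝ (Fin d) → EuclideanSpace ℝ (Fin d))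
    (hsc : ∀ m x y, 0 ≤ f m x - f m y - ⟪g m y, x - y⟫ ∧
      f m x - f m y - ⟪g m y, x - y⟫ ≤ L / 2 * ‖x - y‖ ^ 2)
    (xstar : EuclideanSpace ℝ (Fin d))
    (hmin : ∀ y, avgR (fun m => f m xstar) ≤ avgR (fun m => f m y))
    (x : Fin M → EuclideanSpace ℝ (Fin d)) :
    ‖avgV (fun m => g m (x m))‖ ^ 2 ≤
      2 * L ^ 2 * avgR (fun m => ‖x m - avgV x‖ ^ 2) +
      4 * L * (avgR (fun m => f m (avgV x)) - avgR (fun m => f m xstar)) := by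
  have hMpos : (0:ℝ) < M := Nat.cast_pos.mpr hM
  set xh := avgV x with hxh
  set gb : EuclideanSpace ℝ (Fin d) := avgV (fun m => g m xh) with hgb
  -- Step 1: decomposition
  have hdec : avgV (fun m => g m (x m)) = avgV (fun m => g m (x m) - g m xh) + gb := by
    rw [hgb, avgV, avgV, avgV, ← smul_add, ← Finset.sum_add_distrib]
    simp
  -- Step 2: variance bound
  have hstep2 : ‖avgV (fun m => g m (x m) - g m xh)‖ ^ 2 ≤
      L ^ 2 * avgR (fun m => ‖x m - xh‖ ^ 2) := by
    calc ‖avgV (fun m => g m (x m) - g m xh)‖ ^ 2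
        ≤ avgR (fun m => ‖g m (x m) - g m xh‖ ^ 2) := avg_norm_sq_le hM _
      _ ≤ avgR (fun m => L ^ 2 * ‖x m - xh‖ ^ 2) := by
          rw [avgR, avgR]
          apply mul_le_mul_of_nonneg_left _ (by positivity)
          exact Finset.sum_le_sum fun m _ => grad_lip_sq L hL (f m) (g m) (hsc m) (x m) xh
      _ = L ^ 2 * avgR (fun m => ‖x m - xh‖ ^ 2) := by
          rw [avgR, avgR, ← Finset.mul_sum]; ring
  -- Step 3: ‖gb‖² ≤ 2L (F(xh) - F(xstar))
  have hstep3 : ‖gb‖ ^ 2 ≤ 2 * L * (avgR (fun m => f m xh) - avgR (fun m => f m xstar)) := by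
    set z := xh - L⁻¹ • gb with hzdef
    have hz : z - xh = -(L⁻¹ • gb) := by simp [hzdef]
    -- average the upper smoothness bound at (z, xh)
    have hupper : avgR (fun m => f m z) - avgR (fun m => f m xh) - ⟪gb, z - xh⟫ ≤
        L / 2 * ‖z - xh‖ ^ 2 := by
      have key : ∀ m : Fin M, f m z - f m xh - ⟪g m xh, z - xh⟫ ≤ L / 2 * ‖z - xh‖ ^ 2 :=
        fun m => (hsc m z xh).2
      have hsum := Finset.sum_le_sum (fun m (_ : m ∈ Finset.univ) => key m)
      have hinner : ⟪gb, z - xh⟫ = (1 / (M:ℝ)) * ∑ m, ⟪g m xh, z - xh⟫ := by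
        rw [hgb, avgV, real_inner_smul_left, sum_inner]
      rw [avgR, avgR, hinner]
      have : (1/(M:ℝ)) * ∑ m, (f m z - f m xh - ⟪g m xh, z - xh⟫) ≤
          (1/(M:ℝ)) * (M * (L / 2 * ‖z - xh‖ ^ 2)) := by
        apply mul_le_mul_of_nonneg_left _ (by positivity)
        calc ∑ m, (f m z - f m xh - ⟪g m xh, z - xh⟫)
            ≤ ∑ _m : Fin M, (L / 2 * ‖z - xh‖ ^ 2) := hsum
          _ = M * (L / 2 * ‖z - xh‖ ^ 2) := by simp [Finset.sum_const, mul_comm]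
      calc (1/(M:ℝ)) * ∑ m, f m z - (1/(M:ℝ)) * ∑ m, f m xh
            - (1/(M:ℝ)) * ∑ m, ⟪g m xh, z - xh⟫
          = (1/(M:ℝ)) * ∑ m, (f m z - f m xh - ⟪g m xh, z - xh⟫) := by
            rw [Finset.sum_sub_distrib, Finset.sum_sub_distrib]; ring
        _ ≤ (1/(M:ℝ)) * (M * (L / 2 * ‖z - xh‖ ^ 2)) := this
        _ = L / 2 * ‖z - xh‖ ^ 2 := by field_simp
    have e2 : ⟪gb, z - xh⟫ = -(L⁻¹ * ‖gb‖ ^ 2) := by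
      rw [hz, inner_neg_right, real_inner_smul_right, real_inner_self_eq_norm_sq]
    have e3 : ‖z - xh‖ ^ 2 = L⁻¹ ^ 2 * ‖gb‖ ^ 2 := by
      rw [hz, norm_neg, norm_smul, mul_pow, Real.norm_eq_abs, sq_abs]
    have hm := hmin z
    rw [e2, e3] at hupper
    have h4 : L⁻¹ * ‖gb‖ ^ 2 - L / 2 * (L⁻¹ ^ 2 * ‖gb‖ ^ 2) ≤
        avgR (fun m => f m xh) - avgR (fun m => f m xstar) := by linarith
    have h5 := mul_le_mul_of_nonneg_left h4 (by positivity : (0:ℝ) ≤ 2 * L)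
    have h6 : 2 * L * (L⁻¹ * ‖gb‖ ^ 2 - L / 2 * (L⁻¹ ^ 2 * ‖gb‖ ^ 2)) = ‖gb‖ ^ 2 := by
      field_simp; ring
    linarith
  -- Combine
  have htri : ‖avgV (fun m => g m (x m))‖ ^ 2 ≤
      2 * ‖avgV (fun m => g m (x m) - g m xh)‖ ^ 2 + 2 * ‖gb‖ ^ 2 := by
    rw [hdec]
    have h := norm_add_le (avgV (fun m => g m (x m) - g m xh)) gb
    nlinarith [h, sq_nonneg (‖avgV (fun m => g m (x m) - g m xh)‖ - ‖gb‖),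
      norm_nonneg (avgV (fun m => g m (x m) - g m xh)), norm_nonneg gb,
      norm_nonneg (avgV (fun m => g m (x m) - g m xh) + gb)]
  nlinarith [hstep2, hstep3]
end

section
/- If each f_m is convex and L-smooth, then −(2/M) Σ_{m=1}^M ⟨x̂_t − x_*, ∇f_m(x_t^m)⟩ ≤ −2(f(x̂_t) − f(x_*)) + L V_t, where x̂_t = (1/M)Σ_m x_t^m and V_t = (1/M)Σ_m ‖x_t^m − x̂_t‖². -/
open Finset RealInnerProductSpace

/-- Lemma 4: If each `f_m` is convex and `L`-smooth, then
`−(2/M) ∑ ⟨x̂_t − x⋆, ∇f_m(x_t^m)⟩ ≤ −2(f(x̂_t) − f(x⋆)) + L V_t`. -/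
theorem inner_product_bound {d M : ℕ} (hM : 0 < M) (L : ℝ) (hL : 0 < L)
    (f : Fin M → EuclideanSpace ℝ (Fin d) → ℝ)
    (g : Fin M → EuclideanSpace ℝ (Fin d) → EuclideanSpace ℝ (Fin d))
    (hsc : ∀ m x y, 0 ≤ f m x - f m y - ⟪g m y, x - y⟫ ∧
      f m x - f m y - ⟪g m y, x - y⟫ ≤ L / 2 * ‖x - y‖ ^ 2)
    (xstar : EuclideanSpace ℝ (Fin d))
    (hmin : ∀ y, avgR (fun m => f m xstar) ≤ avgR (fun m => f m y))
    (x : Fin M → EuclideanSpace ℝ (Fin d)) :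
    -((2 / (M : ℝ)) * ∑ m, ⟪avgV x - xstar, g m (x m)⟫) ≤
      -(2 * (avgR (fun m => f m (avgV x)) - avgR (fun m => f m xstar))) +
      L * avgR (fun m => ‖x m - avgV x‖ ^ 2) := by
  set y := avgV x with hy
  have key : ∀ m, -⟪y - xstar, g m (x m)⟫ ≤
      -(f m y - f m xstar) + L / 2 * ‖x m - y‖ ^ 2 := by
    intro m
    have h1 := (hsc m xstar (x m)).1
    have h2 := (hsc m y (x m)).2
    have hn : ‖y - x m‖ = ‖x m - y‖ := norm_sub_rev _ _
    have hi : ⟪y - xstar, g m (x m)⟫ =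
        ⟪g m (x m), y - x m⟫ - ⟪g m (x m), xstar - x m⟫ := by
      rw [real_inner_comm, ← inner_sub_right]
      congr 1
      abel
    rw [hn] at h2
    nlinarith [h1, h2]
  have hsum : -∑ m, ⟪y - xstar, g m (x m)⟫ ≤
      -((∑ m, f m y) - ∑ m, f m xstar) + L / 2 * ∑ m, ‖x m - y‖ ^ 2 := by
    have h := Finset.sum_le_sum (fun m (_ : m ∈ Finset.univ) => key m)
    rw [Finset.sum_add_distrib] at h
    simp only [Finset.sum_neg_distrib, Finset.sum_sub_distrib, ← Finset.mul_sum] at h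
    linarith [h]
  have hMR : (0:ℝ) < 1 / M := by positivity
  simp only [avgR]
  have h2 := mul_le_mul_of_nonneg_left hsum (by positivity : (0:ℝ) ≤ 2 / M)
  ring_nf at h2 ⊢
  linarith [h2]
end

section
/- If each f_m is convex and L-smooth, x̂_{t+1} = x̂_t − γ g_t with γ ≥ 0, then ‖x̂_{t+1} − x_*‖² ≤ ‖x̂_t − x_*‖² + γL(1 + 2γL) V_t − 2γ(1 − 2γL)(f(x̂_t) − f(x_*)). -/
open Finset RealInnerProductSpace

section Aux

variable {d M : ℕ}

lemma avgR_le_avgR {a b : Fin M → ℝ} (h : ∀ m, a m ≤ b m) : avgR a ≤ avgR b := by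
  unfold avgR
  apply mul_le_mul_of_nonneg_left (Finset.sum_le_sum fun m _ => h m)
  positivity

lemma avgR_sub (a b : Fin M → ℝ) : avgR (fun m => a m - b m) = avgR a - avgR b := by
  unfold avgR; rw [Finset.sum_sub_distrib]; ring

lemma avgR_add (a b : Fin M → ℝ) : avgR (fun m => a m + b m) = avgR a + avgR b := by
  unfold avgR; rw [Finset.sum_add_distrib]; ring

lemma avgR_const_mul (c : ℝ) (a : Fin M → ℝ) :
    avgR (fun m => c * a m) = c * avgR a := by
  unfold avgR; rw [← Finset.mul_sum]; ring

lemma avgR_const (hM : 0 < M) (c : ℝ) : avgR (fun _ : Fin M => c) = c := by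
  have hM' : (M : ℝ) ≠ 0 := by positivity
  unfold avgR
  rw [Finset.sum_const, Finset.card_univ, Fintype.card_fin, nsmul_eq_mul]
  field_simp

lemma inner_avgV (v : Fin M → EuclideanSpace ℝ (Fin d)) (w : EuclideanSpace ℝ (Fin d)) :
    ⟪avgV v, w⟫ = avgR (fun m => ⟪v m, w⟫) := by
  rw [avgV, avgR, real_inner_smul_left, sum_inner]

lemma avgV_sub (a b : Fin M → EuclideanSpace ℝ (Fin d)) :
    avgV (fun m => a m - b m) = avgV a - avgV b := by
  simp [avgV, Finset.sum_sub_distrib, smul_sub]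

/-- Jensen for the squared norm of an average. -/
lemma norm_avgV_sq_le (hM : 0 < M) (v : Fin M → EuclideanSpace ℝ (Fin d)) :
    ‖avgV v‖ ^ 2 ≤ avgR (fun m => ‖v m‖ ^ 2) := by
  have hM' : (0 : ℝ) < M := by exact_mod_cast hM
  have h1 : ‖avgV v‖ ≤ (1 / (M : ℝ)) * ∑ m, ‖v m‖ := by
    rw [avgV, norm_smul]
    gcongr
    · rw [Real.norm_eq_abs, abs_of_nonneg (by positivity : (0:ℝ) ≤ 1 / (M:ℝ))]
    · exact norm_sum_le _ _
  have h2 : (∑ m, ‖v m‖) ^ 2 ≤ (M : ℝ) * ∑ m, ‖v m‖ ^ 2 := by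
    simpa using sq_sum_le_card_mul_sum_sq (s := Finset.univ) (f := fun m => ‖v m‖)
  have h3 : ‖avgV v‖ ^ 2 ≤ ((1 / (M : ℝ)) * ∑ m, ‖v m‖) ^ 2 := by
    apply sq_le_sq' <;> nlinarith [norm_nonneg (avgV v)]
  rw [avgR]
  calc ‖avgV v‖ ^ 2 ≤ ((1 / (M : ℝ)) * ∑ m, ‖v m‖) ^ 2 := h3
    _ = (1 / (M : ℝ))^2 * (∑ m, ‖v m‖) ^ 2 := by ring
    _ ≤ (1 / (M : ℝ))^2 * ((M : ℝ) * ∑ m, ‖v m‖ ^ 2) := by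
        apply mul_le_mul_of_nonneg_left h2; positivity
    _ = (1 / (M : ℝ)) * ∑ m, ‖v m‖ ^ 2 := by field_simp

/-- Cocoercivity from the two-sided Bregman bounds. -/
lemma coco {L : ℝ} (hL : 0 < L) (F : EuclideanSpace ℝ (Fin d) → ℝ)
    (G : EuclideanSpace ℝ (Fin d) → EuclideanSpace ℝ (Fin d))
    (h : ∀ x y, 0 ≤ F x - F y - ⟪G y, x - y⟫ ∧
      F x - F y - ⟪G y, x - y⟫ ≤ L / 2 * ‖x - y‖ ^ 2)
    (x y : EuclideanSpace ℝ (Fin d)) :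
    ‖G x - G y‖ ^ 2 ≤ 2 * L * (F x - F y - ⟪G y, x - y⟫) := by
  set u := G x - G y with hu
  set z := x - L⁻¹ • u with hz
  have h1 := (h z y).1
  have h2 := (h z x).2
  have ezy : ⟪G y, z - y⟫ = ⟪G y, x - y⟫ - L⁻¹ * ⟪G y, u⟫ := by
    have : z - y = (x - y) - L⁻¹ • u := by rw [hz]; abel
    rw [this, inner_sub_right, real_inner_smul_right]
  have ezx : ⟪G x, z - x⟫ = -(L⁻¹ * ⟪G x, u⟫) := by
    have : z - x = -(L⁻¹ • u) := by rw [hz]; abel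
    rw [this, inner_neg_right, real_inner_smul_right]
  have enz : ‖z - x‖ ^ 2 = L⁻¹ ^ 2 * ‖u‖ ^ 2 := by
    have : z - x = -(L⁻¹ • u) := by rw [hz]; abel
    rw [this, norm_neg, norm_smul, mul_pow, Real.norm_eq_abs, sq_abs]
  have eu : ⟪G x, u⟫ - ⟪G y, u⟫ = ‖u‖ ^ 2 := by
    rw [← inner_sub_left, ← hu, real_inner_self_eq_norm_sq]
  have hLinv : L * L⁻¹ = 1 := mul_inv_cancel₀ hL.ne'
  have e3 : L / 2 * (L⁻¹ ^ 2 * ‖u‖ ^ 2) = L⁻¹ * ‖u‖ ^ 2 / 2 := by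
    field_simp
  rw [ezy] at h1
  rw [ezx, enz, e3] at h2
  have eu' : L⁻¹ * ⟪G x, u⟫ - L⁻¹ * ⟪G y, u⟫ = L⁻¹ * ‖u‖ ^ 2 := by
    rw [← mul_sub, eu]
  have hkey : L⁻¹ * ‖u‖ ^ 2 ≤ 2 * (F x - F y - ⟪G y, x - y⟫) := by linarith
  calc ‖G x - G y‖ ^ 2 = L * (L⁻¹ * ‖u‖ ^ 2) := by
        rw [← mul_assoc, hLinv, one_mul]
    _ ≤ L * (2 * (F x - F y - ⟪G y, x - y⟫)) :=
        mul_le_mul_of_nonneg_left hkey hL.le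
    _ = 2 * L * (F x - F y - ⟪G y, x - y⟫) := by ring

end Aux

set_option maxHeartbeats 1000000 in
/-- Lemma 1, general stepsize: If each `f_m` is convex and
`L`-smooth, and `x̂_{t+1} = x̂_t − γ g_t` with `γ ≥ 0`, then
`‖x̂_{t+1} − x⋆‖² ≤ ‖x̂_t − x⋆‖² + γL(1 + 2γL) V_t − 2γ(1 − 2γL)(f(x̂_t) − f(x⋆))`. -/
theorem optimality_gap_recursion {d M : ℕ} (hM : 0 < M) (L γ : ℝ) (hL : 0 < L)
    (hγ : 0 ≤ γ)
    (f : Fin M → EuclideanSpace ℝ (Fin d) → ℝ)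
    (g : Fin M → EuclideanSpace ℝ (Fin d) → EuclideanSpace ℝ (Fin d))
    (hsc : ∀ m x y, 0 ≤ f m x - f m y - ⟪g m y, x - y⟫ ∧
      f m x - f m y - ⟪g m y, x - y⟫ ≤ L / 2 * ‖x - y‖ ^ 2)
    (xstar : EuclideanSpace ℝ (Fin d))
    (hmin : ∀ y, avgR (fun m => f m xstar) ≤ avgR (fun m => f m y))
    (x : Fin M → EuclideanSpace ℝ (Fin d)) :
    ‖(avgV x - γ • avgV (fun m => g m (x m))) - xstar‖ ^ 2 ≤
      ‖avgV x - xstar‖ ^ 2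
      + γ * L * (1 + 2 * γ * L) * avgR (fun m => ‖x m - avgV x‖ ^ 2)
      - 2 * γ * (1 - 2 * γ * L) *
        (avgR (fun m => f m (avgV x)) - avgR (fun m => f m xstar)) := by
  have hM' : (0 : ℝ) < M := by exact_mod_cast hM
  set xh := avgV x with hxh
  set gt := avgV (fun m => g m (x m)) with hgt
  set V := avgR (fun m => ‖x m - xh‖ ^ 2) with hV
  set Fh := avgR (fun m => f m xh) with hFh
  set Fs := avgR (fun m => f m xstar) with hFs
  -- the averaged gradient at the optimum vanishes
  have hG0 : avgV (fun m => g m xstar) = 0 := by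
    set G := avgV (fun m => g m xstar) with hGdef
    set y := xstar - L⁻¹ • G with hy
    have hub : ∀ m, f m y - f m xstar ≤ ⟪g m xstar, y - xstar⟫ + L / 2 * ‖y - xstar‖ ^ 2 := by
      intro m
      have := (hsc m y xstar).2
      linarith
    have havg : avgR (fun m => f m y) - Fs ≤
        ⟪G, y - xstar⟫ + L / 2 * ‖y - xstar‖ ^ 2 := by
      have h1 : avgR (fun m => f m y - f m xstar) ≤
          avgR (fun m => ⟪g m xstar, y - xstar⟫ + L / 2 * ‖y - xstar‖ ^ 2) :=
        avgR_le_avgR hub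
      rw [avgR_sub, avgR_add, avgR_const hM, ← inner_avgV, ← hGdef, ← hFs] at h1
      exact h1
    have hyx : y - xstar = -(L⁻¹ • G) := by rw [hy]; abel
    have e1 : ⟪G, y - xstar⟫ = -(L⁻¹ * ‖G‖ ^ 2) := by
      rw [hyx, inner_neg_right, real_inner_smul_right, real_inner_self_eq_norm_sq]
    have e2 : ‖y - xstar‖ ^ 2 = L⁻¹ ^ 2 * ‖G‖ ^ 2 := by
      rw [hyx, norm_neg, norm_smul, mul_pow, Real.norm_eq_abs, sq_abs]
    have e3 : L / 2 * (L⁻¹ ^ 2 * ‖G‖ ^ 2) = L⁻¹ * ‖G‖ ^ 2 / 2 := by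
      field_simp
    have hlow := hmin y
    rw [e1, e2, e3] at havg
    have hkey : L⁻¹ * ‖G‖ ^ 2 ≤ 0 := by linarith
    have hGnorm : ‖G‖ ^ 2 ≤ 0 := by
      nlinarith [inv_pos.mpr hL, sq_nonneg ‖G‖]
    have : ‖G‖ = 0 := by nlinarith [norm_nonneg G]
    exact norm_eq_zero.mp this
  -- Bound 1 : ⟪gt, xh - xstar⟫ ≥ Fh - Fs - L/2 * V
  have hB1 : Fh - Fs - L / 2 * V ≤ ⟪gt, xh - xstar⟫ := by
    have hper : ∀ m, f m xh - f m xstar - L / 2 * ‖x m - xh‖ ^ 2 ≤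
        ⟪g m (x m), xh - xstar⟫ := by
      intro m
      have hcvx := (hsc m xstar (x m)).1
      have hsm := (hsc m xh (x m)).2
      have hsplit : ⟪g m (x m), xh - xstar⟫ =
          ⟪g m (x m), xh - x m⟫ + ⟪g m (x m), x m - xstar⟫ := by
        rw [← inner_add_right]; congr 1; abel
      have hrev : ⟪g m (x m), x m - xstar⟫ = -⟪g m (x m), xstar - x m⟫ := by
        rw [← inner_neg_right]; congr 1; abel
      have hnr : ‖xh - x m‖ = ‖x m - xh‖ := norm_sub_rev _ _
      rw [hsplit, hrev, ← hnr]
      linarith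
    have h1 : avgR (fun m => f m xh - f m xstar - L / 2 * ‖x m - xh‖ ^ 2) ≤
        avgR (fun m => ⟪g m (x m), xh - xstar⟫) := avgR_le_avgR hper
    rw [avgR_sub (fun m => f m xh - f m xstar) (fun m => L / 2 * ‖x m - xh‖ ^ 2),
      avgR_sub (fun m => f m xh) (fun m => f m xstar), avgR_const_mul,
      ← hFh, ← hFs, ← hV, ← inner_avgV, ← hgt] at h1
    exact h1
  -- Bound 2 : ‖gt‖² ≤ 2L²V + 4L(Fh - Fs)
  have hB2 : ‖gt‖ ^ 2 ≤ 2 * L ^ 2 * V + 4 * L * (Fh - Fs) := by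
    set A := avgV (fun m => g m (x m) - g m xh) with hA
    set B := avgV (fun m => g m xh) with hB
    have hgtAB : gt = A + B := by
      rw [hgt, hA, hB, avgV_sub]
      abel
    have hAB : ‖gt‖ ^ 2 ≤ 2 * ‖A‖ ^ 2 + 2 * ‖B‖ ^ 2 := by
      rw [hgtAB]
      have h1 : ‖A + B‖ ^ 2 ≤ (‖A‖ + ‖B‖) ^ 2 :=
        pow_le_pow_left₀ (norm_nonneg _) (norm_add_le A B) 2
      nlinarith [sq_nonneg (‖A‖ - ‖B‖)]
    have hAbound : ‖A‖ ^ 2 ≤ L ^ 2 * V := by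
      have hj := norm_avgV_sq_le hM (fun m => g m (x m) - g m xh)
      have hpt : ∀ m, ‖g m (x m) - g m xh‖ ^ 2 ≤ L ^ 2 * ‖x m - xh‖ ^ 2 := by
        intro m
        have hc := coco hL (f m) (g m) (hsc m) (x m) xh
        have hu := (hsc m (x m) xh).2
        nlinarith [hL.le]
      have h2 : avgR (fun m => ‖g m (x m) - g m xh‖ ^ 2) ≤
          avgR (fun m => L ^ 2 * ‖x m - xh‖ ^ 2) := avgR_le_avgR hpt
      rw [avgR_const_mul, ← hV] at h2
      exact le_trans hj h2
    have hBbound : ‖B‖ ^ 2 ≤ 2 * L * (Fh - Fs) := by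
      have hBeq : B = avgV (fun m => g m xh - g m xstar) := by
        rw [avgV_sub (fun m => g m xh) (fun m => g m xstar), hG0, sub_zero, hB]
      have hj : ‖B‖ ^ 2 ≤ avgR (fun m => ‖g m xh - g m xstar‖ ^ 2) := by
        rw [hBeq]; exact norm_avgV_sq_le hM _
      have hpt : ∀ m, ‖g m xh - g m xstar‖ ^ 2 ≤
          2 * L * (f m xh - f m xstar - ⟪g m xstar, xh - xstar⟫) :=
        fun m => coco hL (f m) (g m) (hsc m) xh xstar
      have h2 : avgR (fun m => ‖g m xh - g m xstar‖ ^ 2) ≤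
          avgR (fun m => 2 * L * (f m xh - f m xstar - ⟪g m xstar, xh - xstar⟫)) :=
        avgR_le_avgR hpt
      rw [avgR_const_mul (2 * L)
          (fun m => f m xh - f m xstar - ⟪g m xstar, xh - xstar⟫),
        avgR_sub (fun m => f m xh - f m xstar) (fun m => ⟪g m xstar, xh - xstar⟫),
        avgR_sub (fun m => f m xh) (fun m => f m xstar),
        ← inner_avgV, hG0, inner_zero_left, ← hFh, ← hFs] at h2
      simp only [sub_zero] at h2
      exact le_trans hj h2
    linarith
  -- Expand the squared norm and combine
  have hexp : ‖(xh - γ • gt) - xstar‖ ^ 2 =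
      ‖xh - xstar‖ ^ 2 - 2 * γ * ⟪gt, xh - xstar⟫ + γ ^ 2 * ‖gt‖ ^ 2 := by
    have e0 : (xh - γ • gt) - xstar = (xh - xstar) - γ • gt := by abel
    rw [e0, norm_sub_sq_real, real_inner_smul_right, norm_smul, mul_pow,
      Real.norm_eq_abs, sq_abs, real_inner_comm]
    ring
  rw [hexp]
  nlinarith [mul_le_mul_of_nonneg_left hB2 (sq_nonneg γ),
    mul_le_mul_of_nonneg_left hB1 (by positivity : (0:ℝ) ≤ 2 * γ)]
end

section
/- Suppose T, H, γ satisfy 0 < γ ≤ 1/(4L), 2‖x_0 − x_*‖²/(γT) ≤ ε/2, and 24γ²σ²H²L ≤ ε/2. Then T/H ≥ (16‖x_0 − x_*‖²/ε) · max{L, σ√(3L/ε)}. -/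
/-- If `0 < γ ≤ 1/(4L)` (and `γ ≤ 1/(4LH)` so that the local GD
theorem applies), `2‖x₀ − x⋆‖²/(γT) ≤ ε/2` and `24γ²σ²H²L ≤ ε/2`, then
`T/H ≥ (16‖x₀ − x⋆‖²/ε) · max{L, σ√(3L/ε)}`. -/
theorem communication_lower_bound {d : ℕ} (ε L σ T H γ : ℝ)
    (x₀ xstar : EuclideanSpace ℝ (Fin d))
    (hε : 0 < ε) (hL : 0 < L) (hσ : 0 ≤ σ) (hT : 0 < T) (hH : 0 < H)
    (hγ0 : 0 < γ) (hγ1 : γ ≤ 1 / (4 * L)) (hγ2 : γ ≤ 1 / (4 * L * H))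
    (h1 : 2 * ‖x₀ - xstar‖ ^ 2 / (γ * T) ≤ ε / 2)
    (h2 : 24 * γ ^ 2 * σ ^ 2 * H ^ 2 * L ≤ ε / 2) :
    T / H ≥ (16 * ‖x₀ - xstar‖ ^ 2 / ε) * max L (σ * Real.sqrt (3 * L / ε)) := by
  set R := ‖x₀ - xstar‖ with hRdef
  have hR0 : 0 ≤ R := norm_nonneg _
  -- From h1: 4R² ≤ ε γ T
  have hA : 4 * R ^ 2 ≤ ε * γ * T := by
    have hγT : 0 < γ * T := mul_pos hγ0 hT
    rw [div_le_div_iff₀ hγT (by norm_num : (0:ℝ) < 2)] at h1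
    nlinarith
  -- Fact B : 4 L γ H ≤ 1
  have hB : 4 * L * γ * H ≤ 1 := by
    rw [le_div_iff₀ (by positivity)] at hγ2
    linarith
  -- Fact C : 4 (σ √(3L/ε)) γ H ≤ 1
  set s := Real.sqrt (3 * L / ε) with hsdef
  have hs0 : 0 ≤ s := Real.sqrt_nonneg _
  have hs2 : s ^ 2 = 3 * L / ε := Real.sq_sqrt (by positivity)
  have hC : 4 * (σ * s) * γ * H ≤ 1 := by
    have hx0 : 0 ≤ 4 * (σ * s) * γ * H := by positivity
    have hsq : (4 * (σ * s) * γ * H) ^ 2 ≤ 1 := by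
      have : (4 * (σ * s) * γ * H) ^ 2 = 48 / ε * (γ ^ 2 * σ ^ 2 * H ^ 2 * L) := by
        have : (4 * (σ * s) * γ * H) ^ 2 = 16 * σ ^ 2 * (3 * L / ε) * γ ^ 2 * H ^ 2 := by
          rw [← hs2]; ring
        rw [this]; field_simp; ring
      rw [this]
      rw [div_mul_eq_mul_div, div_le_one hε]
      nlinarith
    nlinarith [sq_nonneg (4 * (σ * s) * γ * H - 1)]
  -- conclude
  rw [ge_iff_le, div_mul_eq_mul_div, div_le_div_iff₀ hε hH]
  rcases max_cases L (σ * s) with ⟨hm, _⟩ | ⟨hm, _⟩ <;> rw [hm]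
  · nlinarith [mul_nonneg (mul_nonneg hγ0.le hH.le) (sq_nonneg R), hγ0]
  · nlinarith [mul_nonneg (mul_nonneg hγ0.le hH.le) (sq_nonneg R), hγ0]
end
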